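/- arXiv:1809.07663 — 2 statements merged into one kernel-verified Lean document; each statement's English description precedes it below -/
import Mathlib

section
/- Neumann's transcendental equation for the solidification constant λ has a unique positive solution: if T_w < T_m < T_i, L > 0, c > 0, then the function F(λ) = e^{-λ²}/erf(λ) + e^{-λ²}(T_m - T_i)/(erfc(λ)(T_m - T_w)) - λ L √π/(c (T_m - T_w)) has at least one zero in (0, ∞), since F is continuous on (0,∞), tends to +∞ as λ → 0⁺, and tends to -∞ as λ → ∞. -/
open Real MeasureTheory Filter Set Topology

noncomputable def erf (x : ℝ) : ℝ :=
  (2 / Real.sqrt Real.pi) * ∫ t in (0:ℝ)..x, Real.exp (-t ^ 2)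

noncomputable def erfc (x : ℝ) : ℝ := 1 - erf x

lemma gauss_cont : Continuous (fun t : ℝ => Real.exp (-t ^ 2)) := by continuity

lemma gauss_intble (a b : ℝ) :
    IntervalIntegrable (fun t : ℝ => Real.exp (-t ^ 2)) volume a b :=
  gauss_cont.intervalIntegrable a b

lemma erf_continuous : Continuous erf :=
  continuous_const.mul (intervalIntegral.continuous_primitive gauss_intble 0)

lemma erf_zero : erf 0 = 0 := by
  simp [erf, intervalIntegral.integral_same]

lemma sqrt_pi_pos : 0 < Real.sqrt Real.pi := Real.sqrt_pos.mpr Real.pi_pos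

lemma erf_pos {x : ℝ} (hx : 0 < x) : 0 < erf x :=
  mul_pos (div_pos two_pos sqrt_pi_pos)
    (intervalIntegral.intervalIntegral_pos_of_pos (gauss_intble 0 x)
      (fun t => Real.exp_pos _) hx)

lemma erf_mono {x y : ℝ} (hxy : x ≤ y) : erf x ≤ erf y := by
  unfold erf
  have h := intervalIntegral.integral_add_adjacent_intervals
    (gauss_intble 0 x) (gauss_intble x y)
  have h2 : 0 ≤ ∫ t in x..y, Real.exp (-t ^ 2) :=
    intervalIntegral.integral_nonneg hxy (fun u _ => (Real.exp_pos _).le)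
  have h3 : (0:ℝ) ≤ 2 / Real.sqrt Real.pi := by positivity
  nlinarith [h, h2]

lemma erf_lt_one {x : ℝ} (hx : 0 ≤ x) : erf x < 1 := by
  have hIoi : IntegrableOn (fun t : ℝ => Real.exp (-t ^ 2)) (Ioi 0) volume := by
    have := (integrable_exp_neg_mul_sq (b := 1) one_pos).integrableOn (s := Ioi (0:ℝ))
    simpa using this
  have hIocInt : IntegrableOn (fun t : ℝ => Real.exp (-t ^ 2)) (Ioc 0 x) volume :=
    hIoi.mono_set Ioc_subset_Ioi_self
  have hIoix : IntegrableOn (fun t : ℝ => Real.exp (-t ^ 2)) (Ioi x) volume :=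
    hIoi.mono_set (Ioi_subset_Ioi hx)
  have hsplit : (∫ t in Ioc 0 x, Real.exp (-t ^ 2)) + ∫ t in Ioi x, Real.exp (-t ^ 2)
      = ∫ t in Ioi 0, Real.exp (-t ^ 2) := by
    rw [← MeasureTheory.setIntegral_union (Ioc_disjoint_Ioi le_rfl) measurableSet_Ioi
      hIocInt hIoix, Ioc_union_Ioi_eq_Ioi hx]
  have htail : 0 < ∫ t in Ioi x, Real.exp (-t ^ 2) := by
    rw [setIntegral_pos_iff_support_of_nonneg_ae
      (Filter.Eventually.of_forall (fun t => (Real.exp_pos _).le)) hIoix]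
    have : (Function.support fun t : ℝ => Real.exp (-t ^ 2)) = univ := by
      ext t; simp [Function.mem_support, (Real.exp_pos _).ne']
    rw [this, univ_inter, Real.volume_Ioi]
    simp
  have hval : (∫ t in Ioi (0:ℝ), Real.exp (-t ^ 2)) = Real.sqrt Real.pi / 2 := by
    have := integral_gaussian_Ioi 1
    simpa using this
  have hlt : (∫ t in (0:ℝ)..x, Real.exp (-t ^ 2)) < Real.sqrt Real.pi / 2 := by
    rw [intervalIntegral.integral_of_le hx]
    linarith [hsplit, htail, hval]
  unfold erf
  have h3 : (0:ℝ) < 2 / Real.sqrt Real.pi := by positivity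
  have := mul_lt_mul_of_pos_left hlt h3
  have heq : 2 / Real.sqrt Real.pi * (Real.sqrt Real.pi / 2) = 1 := by
    field_simp
  linarith [this, heq.le]

lemma erfc_pos {x : ℝ} (hx : 0 ≤ x) : 0 < erfc x := by
  have := erf_lt_one hx; unfold erfc; linarith

theorem neumann_equation_has_solution
    (T_w T_m T_i L c : ℝ) (h1 : T_w < T_m) (h2 : T_m < T_i)
    (hL : 0 < L) (hc : 0 < c)
    (F : ℝ → ℝ)
    (hF : ∀ l, F l = Real.exp (-l ^ 2) / erf l
      + Real.exp (-l ^ 2) * (T_m - T_i) / (erfc l * (T_m - T_w))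
      - l * L * Real.sqrt Real.pi / (c * (T_m - T_w))) :
    ∃ l : ℝ, 0 < l ∧ F l = 0 := by
  have hA : 0 < T_m - T_w := by linarith
  have hB : T_m - T_i < 0 := by linarith
  set k : ℝ := L * Real.sqrt Real.pi / (c * (T_m - T_w)) with hk
  have hkpos : 0 < k := by
    apply div_pos (mul_pos hL sqrt_pi_pos) (mul_pos hc hA)
  -- Limit at 0⁺ : F → +∞
  have herf0 : Tendsto erf (𝓝[>] 0) (𝓝[>] 0) := by
    rw [tendsto_nhdsWithin_iff]
    constructor
    · have := erf_continuous.tendsto 0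
      rw [erf_zero] at this
      exact this.mono_left nhdsWithin_le_nhds
    · filter_upwards [self_mem_nhdsWithin] with x hx
      exact erf_pos hx
  have hexp0 : Tendsto (fun l : ℝ => Real.exp (-l ^ 2)) (𝓝[>] 0) (𝓝 1) := by
    have : Tendsto (fun l : ℝ => Real.exp (-l ^ 2)) (𝓝 0) (𝓝 (Real.exp (-(0:ℝ) ^ 2))) :=
      gauss_cont.tendsto 0
    norm_num at this
    exact this.mono_left nhdsWithin_le_nhds
  have hg1 : Tendsto (fun l => Real.exp (-l ^ 2) / erf l) (𝓝[>] 0) atTop := by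
    simp only [div_eq_mul_inv]
    exact Filter.Tendsto.pos_mul_atTop one_pos hexp0 (tendsto_inv_nhdsGT_zero.comp herf0)
  have hg23 : Tendsto (fun l => Real.exp (-l ^ 2) * (T_m - T_i) / (erfc l * (T_m - T_w))
      - l * L * Real.sqrt Real.pi / (c * (T_m - T_w))) (𝓝[>] 0)
      (𝓝 (1 * (T_m - T_i) / (1 * (T_m - T_w)) - 0 * L * Real.sqrt Real.pi / (c * (T_m - T_w)))) := by
    apply Filter.Tendsto.sub
    · apply Filter.Tendsto.div (hexp0.mul tendsto_const_nhds)
      · have hcont : Continuous (fun l => erfc l * (T_m - T_w)) :=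
          (continuous_const.sub erf_continuous).mul continuous_const
        have := hcont.tendsto 0
        simp only [erfc, erf_zero, sub_zero] at this
        exact this.mono_left nhdsWithin_le_nhds
      · simp [hA.ne']
    · have : Continuous (fun l : ℝ => l * L * Real.sqrt Real.pi / (c * (T_m - T_w))) := by
        apply Continuous.div_const
        exact (continuous_id.mul continuous_const).mul continuous_const
      exact (this.tendsto 0).mono_left nhdsWithin_le_nhds
  have hFtop : Tendsto F (𝓝[>] 0) atTop := by
    have hev : ∀ᶠ l in 𝓝[>] 0,
        1 * (T_m - T_i) / (1 * (T_m - T_w)) - 0 * L * Real.sqrt Real.pi / (c * (T_m - T_w)) - 1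
          ≤ Real.exp (-l ^ 2) * (T_m - T_i) / (erfc l * (T_m - T_w))
            - l * L * Real.sqrt Real.pi / (c * (T_m - T_w)) :=
      hg23.eventually (eventually_ge_nhds (by linarith))
    have := tendsto_atTop_add_right_of_le' _ _ hg1 hev
    apply this.congr
    intro l
    rw [hF l]
    ring
  obtain ⟨a, ha, hFa⟩ : ∃ a, 0 < a ∧ 0 < F a := by
    have h1' := hFtop.eventually_gt_atTop 0
    obtain ⟨a, ha1, ha2⟩ := (h1'.and self_mem_nhdsWithin).exists
    exact ⟨a, ha2, ha1⟩
  -- Large point with F b < 0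
  have herf1 : 0 < erf 1 := erf_pos one_pos
  set C : ℝ := 1 / erf 1 with hC
  set b : ℝ := max 1 (max (a + 1) (C / k + 1)) with hbdef
  have hb1 : (1:ℝ) ≤ b := le_max_left _ _
  have hba : a < b := lt_of_lt_of_le (by linarith) ((le_max_left _ _).trans (le_max_right _ _))
  have hbk : C / k < b := lt_of_lt_of_le (by linarith) ((le_max_right _ _).trans (le_max_right _ _))
  have hb0 : (0:ℝ) < b := by linarith
  have hFb : F b < 0 := by
    rw [hF b]
    have hterm1 : Real.exp (-b ^ 2) / erf b ≤ C := by
      rw [hC]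
      apply div_le_div₀ (by positivity) _ herf1 (erf_mono hb1)
      have : -b ^ 2 ≤ 0 := by nlinarith
      calc Real.exp (-b ^ 2) ≤ Real.exp 0 := Real.exp_le_exp.mpr this
        _ = 1 := Real.exp_zero
    have hterm2 : Real.exp (-b ^ 2) * (T_m - T_i) / (erfc b * (T_m - T_w)) ≤ 0 := by
      apply div_nonpos_of_nonpos_of_nonneg
      · exact mul_nonpos_of_nonneg_of_nonpos (Real.exp_pos _).le hB.le
      · exact (mul_pos (erfc_pos hb0.le) hA).le
    have hterm3 : b * L * Real.sqrt Real.pi / (c * (T_m - T_w)) = b * k := by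
      rw [hk]; ring
    have hCbk : C < b * k := by
      rwa [div_lt_iff₀ hkpos] at hbk
    linarith [hterm1, hterm2, hterm3.le, hterm3.ge]
  -- IVT on [a, b]
  have hcont : ContinuousOn F (Icc a b) := by
    have hform : ContinuousOn (fun l => Real.exp (-l ^ 2) / erf l
        + Real.exp (-l ^ 2) * (T_m - T_i) / (erfc l * (T_m - T_w))
        - l * L * Real.sqrt Real.pi / (c * (T_m - T_w))) (Icc a b) := by
      apply ContinuousOn.sub
      apply ContinuousOn.add
      · apply ContinuousOn.div gauss_cont.continuousOn erf_continuous.continuousOn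
        intro x hx
        exact (erf_pos (lt_of_lt_of_le ha hx.1)).ne'
      · apply ContinuousOn.div (gauss_cont.continuousOn.mul continuousOn_const)
          (((continuous_const.sub erf_continuous).mul continuous_const).continuousOn)
        intro x hx
        exact (mul_pos (erfc_pos (le_trans ha.le hx.1)) hA).ne'
      · exact (((continuous_id.mul continuous_const).mul continuous_const).div_const _).continuousOn
    exact hform.congr (fun x _ => hF x)
  have hmem : (0:ℝ) ∈ Icc (F b) (F a) := ⟨hFb.le, hFa.le⟩
  obtain ⟨l, hl, hFl⟩ := intermediate_value_Icc' hba.le hcont hmem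
  exact ⟨l, lt_of_lt_of_le ha hl.1, hFl⟩
end

section
/- The exact internal energy of the pressurized spherical shell octant, U_ex = (π P σ_y r_i³/(4E))·[(1-ν)(r_p³/r_i³) - (2/3)(1-2ν)(1 - r_p³/r_o³ + 3 ln(r_p/r_i))], is positive whenever 0 < r_i < r_p < r_o, P > 0, σ_y > 0, E > 0 and 0 ≤ ν < 1/2. -/
theorem exact_internal_energy_positive
    (r_i r_p r_o P σ_y E ν : ℝ)
    (h0 : 0 < r_i) (hip : r_i < r_p) (hpo : r_p < r_o)
    (hP : 0 < P) (hσ : 0 < σ_y) (hE : 0 < E)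
    (hν0 : 0 ≤ ν) (hν : ν < 1 / 2)
    (U_ex : ℝ)
    (hU : U_ex = (Real.pi * P * σ_y * r_i ^ 3 / (4 * E))
      * ((1 - ν) * (r_p ^ 3 / r_i ^ 3)
        - (2 / 3) * (1 - 2 * ν)
          * (1 - r_p ^ 3 / r_o ^ 3 + 3 * Real.log (r_p / r_i)))) :
    0 < U_ex := by
  have hp : (0:ℝ) < r_p := h0.trans hip
  have ho : (0:ℝ) < r_o := hp.trans hpo
  have hy : (0:ℝ) < r_p / r_i := div_pos hp h0
  have hlog : 3 * Real.log (r_p / r_i) ≤ r_p ^ 3 / r_i ^ 3 - 1 := by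
    have h1 : Real.log ((r_p / r_i) ^ 3) ≤ (r_p / r_i) ^ 3 - 1 :=
      Real.log_le_sub_one_of_pos (by positivity)
    rw [Real.log_pow] at h1
    rw [← div_pow]
    linarith
  set x := r_p ^ 3 / r_i ^ 3 with hx
  have hx1 : 1 < x := by
    rw [hx]
    have : r_i ^ 3 < r_p ^ 3 := pow_lt_pow_left₀ hip h0.le (by norm_num)
    rw [lt_div_iff₀ (by positivity)]
    linarith
  have hq : 0 < r_p ^ 3 / r_o ^ 3 := by positivity
  set q := r_p ^ 3 / r_o ^ 3 with hqq
  have hbr : 0 < (1 - ν) * x - (2 / 3) * (1 - 2 * ν) * (1 - q + 3 * Real.log (r_p / r_i)) := by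
    have h2 : (2 / 3) * (1 - 2 * ν) * (1 - q + 3 * Real.log (r_p / r_i))
        ≤ (2 / 3) * (1 - 2 * ν) * (x - q) := by
      apply mul_le_mul_of_nonneg_left (by linarith) (by linarith)
    nlinarith
  have hc : 0 < Real.pi * P * σ_y * r_i ^ 3 / (4 * E) := by
    have := Real.pi_pos
    positivity
  rw [hU]
  exact mul_pos hc hbr
end
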